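/- Let r ∈ [n] with 2r ≤ n, and let π ∈ S_{2r}. Then the centralizer C_{S_n}(π) acts on Ω_{n,r}(π) by simultaneous conjugation, (σ,τ)·δ := (δ⁻¹σδ, δ⁻¹τδ), and the number of orbits of this action equals the number of orbits of the conjugation action of C_{S_{2r}}(π) on Ω_{2r,r}(π). -/

import Mathlib

/-!
Write `A = supp σ ∪ supp τ` for `(σ, τ) ∈ Ω_{n,r}(π)`; it contains `supp π` and has at most
`2r` points. A permutation fixing `supp π` pointwise commutes with `π`, so every orbit of
`C_{S_n}(π)` meets `Ω_{2r,r}(π)`: move the points of `A` outside `[2r]` into free slots of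
`[2r]` while fixing the rest of `A`. Conversely, if `δ ∈ C_{S_n}(π)` conjugates one pair of
`Ω_{2r,r}(π)` into another, then `δ` can be corrected by a permutation fixing `A` pointwise
(hence commuting with `σ`, `τ` and `π`) so that it fixes every point outside `[2r]`. So on
`Ω_{2r,r}(π)` the two actions have the same orbit relation.
-/

open Finset

abbrev P (n : ℕ) := Equiv.Perm (Fin n)

def FixesOutside (n m : ℕ) (ρ : P n) : Prop :=
  ∀ i : Fin n, ¬ ((i : ℕ) < m) → ρ i = i

instance (n m : ℕ) : DecidablePred (FixesOutside n m) := fun _ =>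
  inferInstanceAs (Decidable (∀ _, _))

/-- T_r^s : permutations moving at most r points, all lying in [s]. -/
def Trs (n r s : ℕ) : Finset (P n) :=
  univ.filter fun σ => σ.support.card ≤ r ∧ FixesOutside n s σ

/-- Ω_{s,r}(π) = {(σ,τ) ∈ T_r^s × T_r^s : στ = π}. -/
def OmS (n r s : ℕ) (π : P n) : Finset (P n × P n) :=
  ((Trs n r s) ×ˢ (Trs n r s)).filter fun p => p.1 * p.2 = π

/-- C_{S_{[s]}}(π), the centralizer of π in the subgroup S_{[s]} of S_n. -/
def cent (n s : ℕ) (π : P n) : Finset (P n) :=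
  univ.filter fun δ => δ * π = π * δ ∧ FixesOutside n s δ

/-- the orbit of x under simultaneous conjugation by elements of C. -/
def orbitOf (n : ℕ) (C : Finset (P n)) (Ω : Finset (P n × P n)) (x : P n × P n) :
    Finset (P n × P n) :=
  Ω.filter fun y => ∃ δ ∈ C, (δ⁻¹ * x.1 * δ, δ⁻¹ * x.2 * δ) = y

/-- the number of orbits of the simultaneous-conjugation action of C on Ω. -/
def numOrbits (n : ℕ) (C : Finset (P n)) (Ω : Finset (P n × P n)) : ℕ :=
  (Ω.image (orbitOf n C Ω)).card

namespace Finset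

variable {α β γ : Type*} [DecidableEq β] [DecidableEq γ] {s t : Finset α} {f : α → β} {g : α → γ}

theorem image_eq_image_of_subset (hts : t ⊆ s) (h : ∀ x ∈ s, ∃ y ∈ t, f y = f x) :
    s.image f = t.image f := by
  refine Subset.antisymm (fun b hb => ?_) (image_subset_image hts)
  obtain ⟨x, hx, rfl⟩ := mem_image.mp hb
  obtain ⟨y, hy, hyx⟩ := h x hx
  exact mem_image.mpr ⟨y, hy, hyx⟩

theorem card_image_eq_card_image_of_iff (h : ∀ x ∈ s, ∀ y ∈ s, f x = f y ↔ g x = g y) :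
    #(s.image f) = #(s.image g) := by
  classical
  rcases s.eq_empty_or_nonempty with rfl | ⟨a, -⟩
  · simp
  have : Nonempty α := ⟨a⟩
  have hinv : ∀ x ∈ s, g (Function.invFunOn f s (f x)) = g x := fun x hx =>
    (h _ (Function.invFunOn_mem ⟨x, hx, rfl⟩) x hx).mp (Function.invFunOn_eq ⟨x, hx, rfl⟩)
  refine card_nbij (fun b => g (Function.invFunOn f s b)) ?_ ?_ ?_
  · intro b hb
    obtain ⟨x, hx, rfl⟩ := mem_image.mp hb
    exact mem_image.mpr ⟨x, hx, (hinv x hx).symm⟩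
  · rintro _ hb₁ _ hb₂ hb
    obtain ⟨x, hx, rfl⟩ := mem_image.mp hb₁
    obtain ⟨y, hy, rfl⟩ := mem_image.mp hb₂
    exact (h x hx y hy).mpr ((hinv x hx).symm.trans (hb.trans (hinv y hy)))
  · rintro _ hc
    obtain ⟨x, hx, rfl⟩ := mem_image.mp hc
    exact ⟨f x, mem_image_of_mem f hx, hinv x hx⟩

end Finset

namespace Equiv.Perm

variable {α : Type*} [Fintype α]

theorem exists_eqOn_of_injOn {s : Set α} {f : α → α} (hf : Set.InjOn f s) :
    ∃ e : Perm α, Set.EqOn e f s := by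
  obtain ⟨g, hg⟩ := Set.MapsTo.exists_equiv_extend_of_card_eq (t := univ) (by simp)
    (fun a _ => mem_coe.mpr (mem_univ (f a))) hf
  exact ⟨g.trans (subtypeUnivEquiv mem_univ), hg⟩

theorem exists_fixing_eqOn {s t : Set α} {g : α → α} (hg : Set.InjOn g t)
    (hst : _root_.Disjoint s t) (hsg : _root_.Disjoint s (g '' t)) :
    ∃ e : Perm α, (∀ a ∈ s, e a = a) ∧ Set.EqOn e g t := by
  classical
  have hid : Set.EqOn (t.piecewise g id) id s := fun a ha =>
    Set.piecewise_eq_of_notMem _ _ _ (hst.notMem_of_mem_left ha)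
  have hg' : Set.EqOn (t.piecewise g id) g t := fun a ha => Set.piecewise_eq_of_mem _ _ _ ha
  have hinj : Set.InjOn (t.piecewise g id) (s ∪ t) := by
    refine (Set.injOn_union hst).mpr ⟨Set.injOn_id s |>.congr hid.symm, hg.congr hg'.symm, ?_⟩
    intro a ha b hb hab
    rw [hid ha, hg' hb] at hab
    exact hsg.notMem_of_mem_left ha ⟨b, hb, hab.symm⟩
  obtain ⟨e, he⟩ := exists_eqOn_of_injOn hinj
  exact ⟨e, fun a ha => (he (Or.inl ha)).trans (hid ha),
    fun a ha => (he (Or.inr ha)).trans (hg' ha)⟩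

variable [DecidableEq α]

theorem exists_fixing_inter_mapsTo {A K : Finset α} (h : #A ≤ #K) :
    ∃ e : Perm α, (∀ a ∈ A ∩ K, e a = a) ∧ ∀ a ∈ A, e a ∈ K := by
  rcases isEmpty_or_nonempty α with _ | _
  · exact ⟨1, fun a => isEmptyElim a, fun a => isEmptyElim a⟩
  obtain ⟨g, hgK, hg⟩ := (A \ K).finite_toSet.exists_injOn_of_encard_le
    (t := ((K \ A : Finset α) : Set α)) (by
      rw [Set.encard_coe_eq_coe_finsetCard, Set.encard_coe_eq_coe_finsetCard]
      exact_mod_cast card_sdiff_le_card_sdiff_iff.mpr h)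
  have hdisj : _root_.Disjoint (↑(A ∩ K) : Set α) (g '' ↑(A \ K)) := by
    have h1 : _root_.Disjoint (A ∩ K) (K \ A) :=
      disjoint_of_subset_left inter_subset_left sdiff_disjoint.symm
    exact (disjoint_coe.mpr h1).mono_right (Set.image_subset_iff.mpr hgK)
  obtain ⟨e, hfix, heg⟩ :=
    exists_fixing_eqOn hg (disjoint_coe.mpr (disjoint_sdiff_inter A K).symm) hdisj
  refine ⟨e, hfix, fun a ha => ?_⟩
  by_cases haK : a ∈ K
  · rw [hfix a (mem_inter.mpr ⟨ha, haK⟩)]; exact haK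
  · have ha' : a ∈ (↑(A \ K) : Set α) := by simp [ha, haK]
    rw [heg ha']
    exact (mem_sdiff.mp (hgK ha')).1

theorem commute_of_forall_mem_support {γ σ : Perm α} (h : ∀ a ∈ σ.support, γ a = a) :
    Commute γ σ :=
  Disjoint.commute fun a => by
    by_cases ha : a ∈ σ.support
    · exact Or.inl (h a ha)
    · exact Or.inr (notMem_support.mp ha)

theorem mem_support_inv_mul_mul {δ σ : Perm α} {b : α} :
    b ∈ (δ⁻¹ * σ * δ).support ↔ δ b ∈ σ.support := by
  simp [mem_support, symm_apply_eq]

theorem card_support_inv_mul_mul (δ σ : Perm α) : #(δ⁻¹ * σ * δ).support = #σ.support := by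
  simpa using card_support_conj (σ := δ⁻¹) (τ := σ)

theorem exists_commute_support_conj_subset {σ τ π : Perm α} {K : Finset α}
    (hστ : σ * τ = π) (hπ : π.support ⊆ K) (hcard : #(σ.support ∪ τ.support) ≤ #K) :
    ∃ δ : Perm α, Commute δ π ∧ (δ⁻¹ * σ * δ).support ⊆ K ∧ (δ⁻¹ * τ * δ).support ⊆ K := by
  obtain ⟨e, hfix, heK⟩ := exists_fixing_inter_mapsTo hcard
  have hπA : π.support ⊆ σ.support ∪ τ.support := hστ ▸ support_mul_le σ τ
  have hconj : ∀ ρ : Perm α, ρ.support ⊆ σ.support ∪ τ.support → (e * ρ * e⁻¹).support ⊆ K := by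
    intro ρ hρ
    rw [support_conj]
    intro b hb
    obtain ⟨a, ha, rfl⟩ := mem_map.mp hb
    exact heK a (hρ ha)
  refine ⟨e⁻¹, (commute_of_forall_mem_support fun a ha => ?_).inv_left, ?_, ?_⟩
  · exact hfix a (mem_inter.mpr ⟨hπA ha, hπ ha⟩)
  · simpa using hconj σ subset_union_left
  · simpa using hconj τ subset_union_right

theorem exists_conj_eq_fixing_compl {σ τ π δ : Perm α} {K : Finset α} (hστ : σ * τ = π)
    (hσ : σ.support ⊆ K) (hτ : τ.support ⊆ K) (hσ' : (δ⁻¹ * σ * δ).support ⊆ K)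
    (hτ' : (δ⁻¹ * τ * δ).support ⊆ K) (hδ : Commute δ π) :
    ∃ δ' : Perm α, Commute δ' π ∧ (∀ a ∉ K, δ' a = a) ∧
      δ'⁻¹ * σ * δ' = δ⁻¹ * σ * δ ∧ δ'⁻¹ * τ * δ' = δ⁻¹ * τ * δ := by
  -- `δ' = γ * δ`, where `γ` fixes `supp σ ∪ supp τ` pointwise and undoes `δ` on `δ '' Kᶜ`.
  set A := σ.support ∪ τ.support
  have hδA : ∀ b ∉ K, δ b ∉ A := by
    intro b hb hbA
    rcases mem_union.mp hbA with h | h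
    · exact hb (hσ' (mem_support_inv_mul_mul.mpr h))
    · exact hb (hτ' (mem_support_inv_mul_mul.mpr h))
  have hdisj : _root_.Disjoint (A : Set α) (δ '' (↑K)ᶜ) := by
    rw [Set.disjoint_right]
    rintro _ ⟨b, hb, rfl⟩
    exact hδA b hb
  have hdisj' : _root_.Disjoint (A : Set α) (⇑δ⁻¹ '' (δ '' (↑K)ᶜ)) := by
    simp only [Set.image_image, Perm.coe_inv, symm_apply_apply, Set.image_id']
    exact Set.disjoint_compl_right_iff_subset.mpr (coe_subset.mpr (union_subset hσ hτ))
  obtain ⟨γ, hγA, hγ⟩ := exists_fixing_eqOn δ⁻¹.injective.injOn hdisj hdisj'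
  have hγ_conj : ∀ ρ : Perm α, ρ.support ⊆ A → (γ * δ)⁻¹ * ρ * (γ * δ) = δ⁻¹ * ρ * δ := by
    intro ρ hρ
    have hc : γ * ρ = ρ * γ := (commute_of_forall_mem_support fun a ha => hγA a (hρ ha)).eq
    rw [mul_inv_rev, mul_assoc, mul_assoc, ← mul_assoc ρ, ← hc]
    group
  refine ⟨γ * δ, ?_, fun a ha => ?_, hγ_conj σ subset_union_left, hγ_conj τ subset_union_right⟩
  · have hπA : π.support ⊆ A := hστ ▸ support_mul_le σ τ
    exact (commute_of_forall_mem_support fun a ha => hγA a (hπA ha)).mul_left hδ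
  · simpa using hγ (Set.mem_image_of_mem δ (show a ∈ (↑K : Set α)ᶜ from ha))

end Equiv.Perm

section PairConjugation

variable {n r s : ℕ} {π δ : P n} {x y : P n × P n}

def initSeg (n m : ℕ) : Finset (Fin n) := {i | (i : ℕ) < m}

theorem card_initSeg {m : ℕ} (h : m ≤ n) : #(initSeg n m) = m := by
  simp [initSeg, Fin.card_filter_val_lt, h]

theorem fixesOutside_iff_support_subset {m : ℕ} {ρ : P n} :
    FixesOutside n m ρ ↔ ρ.support ⊆ initSeg n m := by
  simp only [FixesOutside, subset_iff, Equiv.Perm.mem_support, initSeg, mem_filter, mem_univ,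
    true_and]
  exact forall_congr' fun i => not_imp_comm

theorem fixesOutside_self (ρ : P n) : FixesOutside n n ρ :=
  fun i hi => absurd i.isLt hi

theorem mem_Trs {σ : P n} : σ ∈ Trs n r s ↔ #σ.support ≤ r ∧ FixesOutside n s σ := by
  simp [Trs]

theorem mem_OmS : x ∈ OmS n r s π ↔ x.1 ∈ Trs n r s ∧ x.2 ∈ Trs n r s ∧ x.1 * x.2 = π := by
  simp [OmS, and_assoc]

theorem mem_cent : δ ∈ cent n s π ↔ Commute δ π ∧ FixesOutside n s δ := by
  simp [cent, Commute, SemiconjBy]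

theorem OmS_subset_OmS_self : OmS n r s π ⊆ OmS n r n π := fun x hx => by
  obtain ⟨h₁, h₂, hπ⟩ := mem_OmS.mp hx
  exact mem_OmS.mpr ⟨mem_Trs.mpr ⟨(mem_Trs.mp h₁).1, fixesOutside_self _⟩,
    mem_Trs.mpr ⟨(mem_Trs.mp h₂).1, fixesOutside_self _⟩, hπ⟩

theorem cent_subset_cent_self : cent n s π ⊆ cent n n π := fun δ hδ =>
  mem_cent.mpr ⟨(mem_cent.mp hδ).1, fixesOutside_self δ⟩

theorem one_mem_cent : (1 : P n) ∈ cent n s π :=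
  mem_cent.mpr ⟨Commute.one_left π, fun _ _ => rfl⟩

theorem mul_mem_cent {ε : P n} (hδ : δ ∈ cent n s π) (hε : ε ∈ cent n s π) :
    δ * ε ∈ cent n s π := by
  obtain ⟨hδπ, hδs⟩ := mem_cent.mp hδ
  obtain ⟨hεπ, hεs⟩ := mem_cent.mp hε
  refine mem_cent.mpr ⟨hδπ.mul_left hεπ, fun i hi => ?_⟩
  rw [Equiv.Perm.mul_apply, hεs i hi, hδs i hi]

theorem inv_mem_cent (hδ : δ ∈ cent n s π) : δ⁻¹ ∈ cent n s π := by
  obtain ⟨hδπ, hδs⟩ := mem_cent.mp hδ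
  exact mem_cent.mpr ⟨hδπ.inv_left, fun i hi => Equiv.Perm.inv_eq_iff_eq.mpr (hδs i hi).symm⟩

def conjPair (δ : P n) (x : P n × P n) : P n × P n := (δ⁻¹ * x.1 * δ, δ⁻¹ * x.2 * δ)

theorem conjPair_one (x : P n × P n) : conjPair 1 x = x := by
  simp [conjPair]

theorem conjPair_conjPair (δ ε : P n) (x : P n × P n) :
    conjPair ε (conjPair δ x) = conjPair (δ * ε) x := by
  simp [conjPair, mul_assoc]

theorem mem_orbitOf {C : Finset (P n)} {Ω : Finset (P n × P n)} :
    y ∈ orbitOf n C Ω x ↔ y ∈ Ω ∧ ∃ δ ∈ C, conjPair δ x = y := by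
  simp [orbitOf, conjPair]

theorem orbitOf_eq_orbitOf_iff {Ω : Finset (P n × P n)} (hy : y ∈ Ω) :
    orbitOf n (cent n s π) Ω x = orbitOf n (cent n s π) Ω y ↔
      ∃ δ ∈ cent n s π, conjPair δ x = y := by
  constructor
  · intro h
    have hyy : y ∈ orbitOf n (cent n s π) Ω y :=
      mem_orbitOf.mpr ⟨hy, 1, one_mem_cent, conjPair_one y⟩
    exact (mem_orbitOf.mp (h ▸ hyy)).2
  · rintro ⟨δ, hδ, rfl⟩
    ext z
    simp only [mem_orbitOf]
    constructor
    · rintro ⟨hz, ε, hε, rfl⟩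
      refine ⟨hz, δ⁻¹ * ε, mul_mem_cent (inv_mem_cent hδ) hε, ?_⟩
      rw [conjPair_conjPair, mul_inv_cancel_left]
    · rintro ⟨hz, ε, hε, rfl⟩
      exact ⟨hz, δ * ε, mul_mem_cent hδ hε, conjPair_conjPair δ ε x⟩

theorem conjPair_mem_OmS (hx : x ∈ OmS n r n π) (hδ : Commute δ π)
    (h₁ : FixesOutside n s (δ⁻¹ * x.1 * δ)) (h₂ : FixesOutside n s (δ⁻¹ * x.2 * δ)) :
    conjPair δ x ∈ OmS n r s π := by
  obtain ⟨hx₁, hx₂, hπ⟩ := mem_OmS.mp hx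
  refine mem_OmS.mpr ⟨mem_Trs.mpr ⟨?_, h₁⟩, mem_Trs.mpr ⟨?_, h₂⟩, ?_⟩
  · simpa [conjPair, Equiv.Perm.card_support_inv_mul_mul] using (mem_Trs.mp hx₁).1
  · simpa [conjPair, Equiv.Perm.card_support_inv_mul_mul] using (mem_Trs.mp hx₂).1
  · calc δ⁻¹ * x.1 * δ * (δ⁻¹ * x.2 * δ) = δ⁻¹ * (x.1 * x.2 * δ) := by group
      _ = π := by rw [hπ, ← hδ.eq, inv_mul_cancel_left]

theorem conjPair_mem_OmS_self (hδ : δ ∈ cent n n π) (hx : x ∈ OmS n r n π) :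
    conjPair δ x ∈ OmS n r n π :=
  conjPair_mem_OmS hx (mem_cent.mp hδ).1 (fixesOutside_self _) (fixesOutside_self _)

theorem exists_conjPair_mem_OmS (h2r : 2 * r ≤ n) (hπ : FixesOutside n (2 * r) π)
    (hx : x ∈ OmS n r n π) : ∃ δ ∈ cent n n π, conjPair δ x ∈ OmS n r (2 * r) π := by
  obtain ⟨hx₁, hx₂, hxπ⟩ := mem_OmS.mp hx
  have hcard : #(x.1.support ∪ x.2.support) ≤ #(initSeg n (2 * r)) := by
    rw [card_initSeg h2r]
    linarith [card_union_le x.1.support x.2.support, (mem_Trs.mp hx₁).1, (mem_Trs.mp hx₂).1]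
  obtain ⟨δ, hδ, h₁, h₂⟩ := Equiv.Perm.exists_commute_support_conj_subset hxπ
    (fixesOutside_iff_support_subset.mp hπ) hcard
  exact ⟨δ, mem_cent.mpr ⟨hδ, fixesOutside_self δ⟩, conjPair_mem_OmS hx hδ
    (fixesOutside_iff_support_subset.mpr h₁) (fixesOutside_iff_support_subset.mpr h₂)⟩

theorem exists_conjPair_eq_of_mem_OmS (hx : x ∈ OmS n r s π) (hy : y ∈ OmS n r s π)
    (hδ : δ ∈ cent n n π) (hxy : conjPair δ x = y) :
    ∃ δ' ∈ cent n s π, conjPair δ' x = y := by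
  obtain ⟨hx₁, hx₂, hxπ⟩ := mem_OmS.mp hx
  obtain ⟨hy₁, hy₂, -⟩ := mem_OmS.mp hy
  subst hxy
  obtain ⟨δ', hδ'π, hδ's, h₁, h₂⟩ := Equiv.Perm.exists_conj_eq_fixing_compl hxπ
    (fixesOutside_iff_support_subset.mp (mem_Trs.mp hx₁).2)
    (fixesOutside_iff_support_subset.mp (mem_Trs.mp hx₂).2)
    (fixesOutside_iff_support_subset.mp (mem_Trs.mp hy₁).2)
    (fixesOutside_iff_support_subset.mp (mem_Trs.mp hy₂).2) (mem_cent.mp hδ).1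
  refine ⟨δ', mem_cent.mpr ⟨hδ'π, fun i hi => hδ's i ?_⟩, ?_⟩
  · simpa [initSeg] using hi
  · simp [conjPair, h₁, h₂]

end PairConjugation

theorem numOrbits_eq_general (n r : ℕ) (h2r : 2 * r ≤ n)
    (π : P n) (hπ : FixesOutside n (2 * r) π) :
    (∀ δ ∈ cent n n π, ∀ x ∈ OmS n r n π,
        (δ⁻¹ * x.1 * δ, δ⁻¹ * x.2 * δ) ∈ OmS n r n π) ∧
    numOrbits n (cent n n π) (OmS n r n π)
      = numOrbits n (cent n (2 * r) π) (OmS n r (2 * r) π) := by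
  refine ⟨fun δ hδ x hx => conjPair_mem_OmS_self hδ hx, ?_⟩
  have hmeets : ∀ x ∈ OmS n r n π, ∃ y ∈ OmS n r (2 * r) π,
      orbitOf n (cent n n π) (OmS n r n π) y = orbitOf n (cent n n π) (OmS n r n π) x := by
    intro x hx
    obtain ⟨δ, hδ, hδx⟩ := exists_conjPair_mem_OmS h2r hπ hx
    exact ⟨conjPair δ x, hδx,
      ((orbitOf_eq_orbitOf_iff (OmS_subset_OmS_self hδx)).mpr ⟨δ, hδ, rfl⟩).symm⟩
  rw [numOrbits, numOrbits, image_eq_image_of_subset OmS_subset_OmS_self hmeets]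
  refine card_image_eq_card_image_of_iff fun x hx y hy => ?_
  rw [orbitOf_eq_orbitOf_iff (OmS_subset_OmS_self hy), orbitOf_eq_orbitOf_iff hy]
  exact ⟨fun ⟨δ, hδ, hxy⟩ => exists_conjPair_eq_of_mem_OmS hx hy hδ hxy,
    fun ⟨δ, hδ, hxy⟩ => ⟨δ, cent_subset_cent_self hδ, hxy⟩⟩

/-- Lemma 3.3: for 2r ≤ n and π ∈ S_{2r}, the conjugation action of C_{S_n}(π)
on Ω_{n,r}(π) (which is well defined: it sends Ω_{n,r}(π) to itself) has the
same number of orbits as the conjugation action of C_{S_{2r}}(π) on Ω_{2r,r}(π). -/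
theorem numOrbits_eq (n r : ℕ) (hr : 1 ≤ r) (h2r : 2 * r ≤ n)
    (π : P n) (hπ : FixesOutside n (2 * r) π) :
    (∀ δ ∈ cent n n π, ∀ x ∈ OmS n r n π,
        (δ⁻¹ * x.1 * δ, δ⁻¹ * x.2 * δ) ∈ OmS n r n π) ∧
    numOrbits n (cent n n π) (OmS n r n π)
      = numOrbits n (cent n (2 * r) π) (OmS n r (2 * r) π) :=
  numOrbits_eq_general n r h2r π hπ
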